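/- arXiv:1407.1375 — 3 statements merged into one kernel-verified Lean document; each statement's English description precedes it below -/
import Mathlib

section
/- For every complex s = σ + it with σ ∈ (1/2, 1), |t| ≥ 2 and every δ ∈ (0,1), one has |Γ(1−s) δ^{s−1}| ≤ √(2π) · e^{−π|t|/2} · δ^{σ−1}. -/
/-!
Put `a = 1 - σ ∈ (0, 1/2)`, so that `1 - s = a - it`. Since `|B(z, w)| ≤ B(Re z, w)`, the Beta
function identity shows that `x ↦ |Γ(x + it)| / Γ(x)` is nondecreasing; comparing `a + 2` with
`5/2` and descending with `Γ(s + 1) = s Γ(s)` gives `|Γ(a + it)| ≤ |Γ(1/2 + it)|` as soon as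
`|t| ≥ 2`, the loss `Γ(a + 2) / Γ(5/2)` being controlled by convexity of `Γ` on `[2, 5/2]`.
Finally the reflection formula gives `|Γ(1/2 + it)|² = π / cosh(πt) ≤ 2π e^{-π|t|}`.
-/

open Complex Real

theorem Complex.norm_betaIntegral_le (z : ℂ) (w : ℝ) :
    ‖betaIntegral z w‖ ≤ ‖betaIntegral z.re w‖ := by
  set g : ℝ → ℝ := fun x ↦ x ^ (z.re - 1) * (1 - x) ^ (w - 1)
  have hI : Set.uIoc (0 : ℝ) 1 = Set.Ioc 0 1 := Set.uIoc_of_le zero_le_one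
  have hg : betaIntegral z.re w = ((∫ x in (0 : ℝ)..1, g x : ℝ) : ℂ) := by
    rw [betaIntegral, ← intervalIntegral.integral_ofReal]
    refine intervalIntegral.integral_congr_ae (.of_forall fun x hx ↦ ?_)
    rw [hI] at hx
    simp only [g, ofReal_mul, ofReal_cpow hx.1.le, ofReal_cpow (sub_nonneg.2 hx.2)]
    push_cast; rfl
  calc ‖betaIntegral z w‖
      ≤ ∫ x in (0 : ℝ)..1, ‖(x : ℂ) ^ (z - 1) * (1 - (x : ℂ)) ^ ((w : ℂ) - 1)‖ :=
        intervalIntegral.norm_integral_le_integral_norm zero_le_one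
    _ = ∫ x in (0 : ℝ)..1, g x := by
        refine intervalIntegral.integral_congr_ae (.of_forall fun x hx ↦ ?_)
        rw [hI] at hx
        have h1x : (1 - (x : ℂ)) ^ ((w : ℂ) - 1) = (((1 - x) ^ (w - 1) : ℝ) : ℂ) := by
          rw [ofReal_cpow (sub_nonneg.2 hx.2)]; push_cast; rfl
        rw [norm_mul, norm_cpow_eq_rpow_re_of_pos hx.1, h1x, norm_real,
          Real.norm_of_nonneg (Real.rpow_nonneg (sub_nonneg.2 hx.2) _)]
        simp [g]
    _ ≤ ‖betaIntegral z.re w‖ := by rw [hg, norm_real, Real.norm_eq_abs]; exact le_abs_self _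

theorem Complex.norm_Gamma_mul_Gamma_re_add_le {z : ℂ} (hz : 0 < z.re) {w : ℝ} (hw : 0 < w) :
    ‖Gamma z‖ * Real.Gamma (z.re + w) ≤ ‖Gamma (z + w)‖ * Real.Gamma z.re := by
  have hΓw := Real.Gamma_pos_of_pos hw
  have hΓzw := Real.Gamma_pos_of_pos (add_pos hz hw)
  have hz_beta := Gamma_mul_Gamma_eq_betaIntegral (t := w) hz (by simpa using hw)
  have hre_beta : Real.Gamma z.re * Real.Gamma w =
      Real.Gamma (z.re + w) * ‖betaIntegral z.re w‖ := by
    have h := Gamma_mul_Gamma_eq_betaIntegral (s := z.re) (t := w) (by simpa using hz)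
      (by simpa using hw)
    rw [← ofReal_add, Gamma_ofReal, Gamma_ofReal, Gamma_ofReal] at h
    have := congrArg norm h
    rwa [norm_mul, norm_mul, norm_real, norm_real, norm_real,
      Real.norm_of_nonneg (Real.Gamma_pos_of_pos hz).le, Real.norm_of_nonneg hΓw.le,
      Real.norm_of_nonneg hΓzw.le] at this
  have hbeta_le :
      ‖Gamma z‖ * Real.Gamma w ≤ ‖Gamma (z + w)‖ * ‖betaIntegral z.re w‖ := by
    calc ‖Gamma z‖ * Real.Gamma w = ‖Gamma z * Gamma w‖ := by
          rw [norm_mul, Gamma_ofReal, norm_real, Real.norm_of_nonneg hΓw.le]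
      _ = ‖Gamma (z + w)‖ * ‖betaIntegral z w‖ := by rw [hz_beta, norm_mul]
      _ ≤ ‖Gamma (z + w)‖ * ‖betaIntegral z.re w‖ := by
          gcongr; exact norm_betaIntegral_le z w
  refine le_of_mul_le_mul_right ?_ hΓw
  calc ‖Gamma z‖ * Real.Gamma (z.re + w) * Real.Gamma w
      = ‖Gamma z‖ * Real.Gamma w * Real.Gamma (z.re + w) := by ring
    _ ≤ ‖Gamma (z + w)‖ * ‖betaIntegral z.re w‖ * Real.Gamma (z.re + w) := by gcongr
    _ = ‖Gamma (z + w)‖ * Real.Gamma z.re * Real.Gamma w := by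
        linear_combination (‖Gamma (z + w)‖) * hre_beta.symm

theorem Real.Gamma_five_halves : Real.Gamma (5 / 2) = 3 * √π / 4 := by
  have h := Real.Gamma_nat_add_half 2
  norm_num [Nat.doubleFactorial] at h
  rw [← h]

-- Convexity of `Γ` on `[2, 5/2]`, with `Γ(2) = 1` and `Γ(5/2) = 3√π/4 ≥ 9/7`.
theorem Real.Gamma_add_two_le {a : ℝ} (ha₀ : 0 ≤ a) (ha₁ : a ≤ 1 / 2) :
    Real.Gamma (a + 2) ≤ (7 + 4 * a) / 9 * Real.Gamma (5 / 2) := by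
  have hconv := Real.convexOn_Gamma.2 (by norm_num : (2 : ℝ) ∈ Set.Ioi 0)
    (by norm_num : (5 / 2 : ℝ) ∈ Set.Ioi 0) (by linarith : 0 ≤ 1 - 2 * a)
    (by linarith : 0 ≤ 2 * a) (by ring)
  have hG : 9 / 7 ≤ Real.Gamma (5 / 2) := by
    rw [Real.Gamma_five_halves]
    have : 12 / 7 ≤ √π := Real.le_sqrt_of_sq_le (by nlinarith [Real.pi_gt_three])
    linarith
  simp only [smul_eq_mul, Real.Gamma_two] at hconv
  rw [show a + 2 = (1 - 2 * a) * 2 + 2 * a * (5 / 2) by ring]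
  nlinarith

theorem Real.exp_abs_le_two_mul_cosh (x : ℝ) : Real.exp |x| ≤ 2 * Real.cosh x := by
  rw [← Real.cosh_abs, Real.cosh_eq]
  linarith [Real.exp_pos (-|x|)]

theorem Complex.norm_Gamma_one_half_add_mul_I_sq (t : ℝ) :
    ‖Gamma (1 / 2 + t * I)‖ ^ 2 = π / Real.cosh (π * t) := by
  have hconj : starRingEnd ℂ (1 / 2 + t * I) = 1 - (1 / 2 + t * I) := by
    apply Complex.ext <;> norm_num
  have hsin : Complex.sin (π * (1 / 2 + t * I)) = Real.cosh (π * t) := by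
    rw [show (π : ℂ) * (1 / 2 + t * I) = π / 2 + (π * t : ℝ) * I by push_cast; ring,
      Complex.sin_add_mul_I]
    simp [Complex.ofReal_cosh]
  have h := Gamma_mul_Gamma_one_sub (1 / 2 + t * I)
  rw [← hconj, Gamma_conj, mul_conj', hsin] at h
  exact_mod_cast h

theorem Complex.norm_Gamma_one_half_add_mul_I_le (t : ℝ) :
    ‖Gamma (1 / 2 + t * I)‖ ≤ √(2 * π) * Real.exp (-π * |t| / 2) := by
  refine (pow_le_pow_iff_left₀ (norm_nonneg _) (by positivity) two_ne_zero).1 ?_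
  rw [norm_Gamma_one_half_add_mul_I_sq, mul_pow, Real.sq_sqrt (by positivity), ← Real.exp_nat_mul,
    show ((2 : ℕ) : ℝ) * (-π * |t| / 2) = -π * |t| by push_cast; ring]
  have hcosh := Real.exp_abs_le_two_mul_cosh (π * t)
  rw [abs_mul, abs_of_pos Real.pi_pos] at hcosh
  rw [div_le_iff₀ (Real.cosh_pos _)]
  calc π = 2 * π * (Real.exp (-π * |t|) * Real.exp (π * |t|)) / 2 := by
        rw [← Real.exp_add]; simp
    _ ≤ 2 * π * Real.exp (-π * |t|) * Real.cosh (π * t) := by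
        have := mul_le_mul_of_nonneg_left hcosh (by positivity : 0 ≤ π * Real.exp (-π * |t|))
        linarith

theorem Complex.Gamma_add_two {s : ℂ} (h₀ : s ≠ 0) (h₁ : s + 1 ≠ 0) :
    Gamma (s + 2) = (s + 1) * s * Gamma s := by
  rw [show s + 2 = s + 1 + 1 by ring, Gamma_add_one _ h₁, Gamma_add_one _ h₀, mul_assoc]

theorem Complex.sq_norm_add_one_mul_norm (x y : ℝ) :
    (‖(x + y * I : ℂ) + 1‖ * ‖(x + y * I : ℂ)‖) ^ 2 =
      ((x + 1) ^ 2 + y ^ 2) * (x ^ 2 + y ^ 2) := by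
  rw [mul_pow, Complex.sq_norm, Complex.sq_norm, normSq_add_mul_I,
    show (x + y * I : ℂ) + 1 = ((x + 1 : ℝ) : ℂ) + y * I by push_cast; ring, normSq_add_mul_I]

theorem Complex.norm_Gamma_add_mul_I_le {a t : ℝ} (ha₀ : 0 < a) (ha₁ : a < 1 / 2)
    (ht : 2 ≤ |t|) :
    ‖Gamma (a + t * I)‖ ≤ ‖Gamma (1 / 2 + t * I)‖ := by
  set z : ℂ := a + t * I
  set w : ℂ := 1 / 2 + t * I
  have hz₀ : z ≠ 0 := ne_of_apply_ne re (by simp [z]; linarith)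
  have hz₁ : z + 1 ≠ 0 := ne_of_apply_ne re (by simp [z]; linarith)
  have hw₀ : w ≠ 0 := ne_of_apply_ne re (by simp [w])
  have hw₁ : w + 1 ≠ 0 := ne_of_apply_ne re (by simp [w]; linarith)
  have hshift :
      ‖Gamma (z + 2)‖ * Real.Gamma (5 / 2) ≤ ‖Gamma (w + 2)‖ * Real.Gamma (a + 2) := by
    have h := norm_Gamma_mul_Gamma_re_add_le (z := z + 2) (by simp [z]; linarith)
      (w := 1 / 2 - a) (by linarith)
    have hre : (z + 2).re = a + 2 := by simp [z]
    rwa [hre, show a + 2 + (1 / 2 - a) = 5 / 2 by ring,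
      show z + 2 + ((1 / 2 - a : ℝ) : ℂ) = w + 2 by simp [z, w]; ring] at h
  have hpoly : (7 + 4 * a) / 9 * (‖w + 1‖ * ‖w‖) ≤ ‖z + 1‖ * ‖z‖ := by
    refine (pow_le_pow_iff_left₀ (by positivity) (by positivity) two_ne_zero).1 ?_
    have hw' : w = ((1 / 2 : ℝ) : ℂ) + t * I := by simp [w]
    rw [mul_pow, hw', sq_norm_add_one_mul_norm, sq_norm_add_one_mul_norm]
    have hu : 4 ≤ t ^ 2 := by nlinarith [sq_abs t]
    have ha : 0 ≤ a * (1 / 2 - a) := mul_nonneg ha₀.le (by linarith)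
    nlinarith [mul_nonneg ha (sub_nonneg.2 hu),
      mul_nonneg (sub_nonneg.2 ha₁.le) (sub_nonneg.2 hu),
      mul_nonneg (sub_nonneg.2 hu) (sub_nonneg.2 hu)]
  have hG := Real.Gamma_pos_of_pos (by norm_num : (0 : ℝ) < 5 / 2)
  rw [Gamma_add_two hz₀ hz₁, Gamma_add_two hw₀ hw₁, norm_mul, norm_mul, norm_mul,
    norm_mul] at hshift
  refine le_of_mul_le_mul_left ?_ (by positivity : 0 < ‖z + 1‖ * ‖z‖ * Real.Gamma (5 / 2))
  calc ‖z + 1‖ * ‖z‖ * Real.Gamma (5 / 2) * ‖Gamma z‖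
      = ‖z + 1‖ * ‖z‖ * ‖Gamma z‖ * Real.Gamma (5 / 2) := by ring
    _ ≤ ‖w + 1‖ * ‖w‖ * ‖Gamma w‖ * Real.Gamma (a + 2) := hshift
    _ ≤ ‖w + 1‖ * ‖w‖ * ‖Gamma w‖ * ((7 + 4 * a) / 9 * Real.Gamma (5 / 2)) := by
        gcongr; exact Real.Gamma_add_two_le ha₀.le ha₁.le
    _ = (7 + 4 * a) / 9 * (‖w + 1‖ * ‖w‖) * Real.Gamma (5 / 2) * ‖Gamma w‖ := by ring
    _ ≤ ‖z + 1‖ * ‖z‖ * Real.Gamma (5 / 2) * ‖Gamma w‖ := by gcongr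

theorem gamma_delta_bound (σ t δ : ℝ) (hσ : σ ∈ Set.Ioo (1/2 : ℝ) 1)
    (ht : 2 ≤ |t|) (hδ : δ ∈ Set.Ioo (0 : ℝ) 1) :
    ‖Complex.Gamma (1 - (σ + t * I)) * (δ : ℂ) ^ ((σ + t * I) - 1)‖ ≤
      Real.sqrt (2 * π) * Real.exp (-π * |t| / 2) * δ ^ (σ - 1) := by
  rw [norm_mul, norm_cpow_eq_rpow_re_of_pos hδ.1]
  have hre : ((σ : ℂ) + t * I - 1).re = σ - 1 := by simp
  rw [hre]
  refine mul_le_mul_of_nonneg_right ?_ (Real.rpow_nonneg hδ.1.le _)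
  rw [show 1 - ((σ : ℂ) + t * I) = ((1 - σ : ℝ) : ℂ) + (-t : ℝ) * I by push_cast; ring]
  calc _ ≤ ‖Gamma (1 / 2 + (-t : ℝ) * I)‖ :=
        norm_Gamma_add_mul_I_le (by linarith [hσ.2]) (by linarith [hσ.1]) (by rwa [abs_neg])
    _ ≤ _ := by simpa using norm_Gamma_one_half_add_mul_I_le (-t)
end

section
/- Let α > 0, a > 0, and set b² = a²/2, c₀ = −2(2α² − a²)(α² + a²)α² / (a²(10α² + 3a²)), c₁ = (2α² + a²)(4α⁴ + 12a²α² + a⁴) / (4a²(10α² + 3a²)). If a² < 6α², then for every γ ∈ [−a, a], c₁/(α² + (γ − b)²) + c₀/(α² + γ²) + c₁/(α² + (γ + b)²) ≥ 1. -/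
theorem three_point_poisson_minorant (α a : ℝ) (hα : 0 < α) (ha : 0 < a)
    (hcond : a ^ 2 < 6 * α ^ 2) :
    ∀ γ ∈ Set.Icc (-a) a,
      (1 : ℝ) ≤
        ((2 * α ^ 2 + a ^ 2) * (4 * α ^ 4 + 12 * a ^ 2 * α ^ 2 + a ^ 4) /
            (4 * a ^ 2 * (10 * α ^ 2 + 3 * a ^ 2))) / (α ^ 2 + (γ - a / Real.sqrt 2) ^ 2)
        + (-2 * ((2 * α ^ 2 - a ^ 2) * (α ^ 2 + a ^ 2) * α ^ 2) /
            (a ^ 2 * (10 * α ^ 2 + 3 * a ^ 2))) / (α ^ 2 + γ ^ 2)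
        + ((2 * α ^ 2 + a ^ 2) * (4 * α ^ 4 + 12 * a ^ 2 * α ^ 2 + a ^ 4) /
            (4 * a ^ 2 * (10 * α ^ 2 + 3 * a ^ 2))) / (α ^ 2 + (γ + a / Real.sqrt 2) ^ 2) := by
  intro γ hγ
  obtain ⟨h1, h2⟩ := hγ
  have hb2 : (a / Real.sqrt 2) ^ 2 = a ^ 2 / 2 := by
    rw [div_pow, Real.sq_sqrt (by norm_num : (0:ℝ) ≤ 2)]
  set b := a / Real.sqrt 2 with hbdef
  have hDm : 0 < α ^ 2 + (γ - b) ^ 2 := by positivity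
  have hD0 : 0 < α ^ 2 + γ ^ 2 := by positivity
  have hDp : 0 < α ^ 2 + (γ + b) ^ 2 := by positivity
  have hg2 : γ ^ 2 ≤ a ^ 2 := sq_le_sq' h1 h2
  have hF : 0 ≤ 2 * a ^ 2 * γ ^ 2 * (a ^ 2 - γ ^ 2) *
      (20 * α ^ 2 * γ ^ 2 + 6 * a ^ 2 * γ ^ 2 + (36 * α ^ 4 - a ^ 4)) := by
    have h6 : 0 ≤ 36 * α ^ 4 - a ^ 4 := by nlinarith
    have h7 : 0 ≤ 20 * α ^ 2 * γ ^ 2 + 6 * a ^ 2 * γ ^ 2 + (36 * α ^ 4 - a ^ 4) := by positivity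
    have h8 : 0 ≤ a ^ 2 - γ ^ 2 := by linarith
    have h9 : 0 ≤ 2 * a ^ 2 * γ ^ 2 := by positivity
    exact mul_nonneg (mul_nonneg h9 h8) h7
  have hprod : (α ^ 2 + (γ - b) ^ 2) * (α ^ 2 + (γ + b) ^ 2) =
      (α ^ 2 + γ ^ 2 + a ^ 2 / 2) ^ 2 - 2 * γ ^ 2 * a ^ 2 := by
    linear_combination (2 * α ^ 2 - 2 * γ ^ 2 + b ^ 2 + a ^ 2 / 2) * hb2
  have hPr : 0 < (α ^ 2 + γ ^ 2 + a ^ 2 / 2) ^ 2 - 2 * γ ^ 2 * a ^ 2 := by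
    have := mul_pos hDm hDp
    rwa [hprod] at this
  have hkey : ((2 * α ^ 2 + a ^ 2) * (4 * α ^ 4 + 12 * a ^ 2 * α ^ 2 + a ^ 4) /
        (4 * a ^ 2 * (10 * α ^ 2 + 3 * a ^ 2))) / (α ^ 2 + (γ - b) ^ 2)
      + ((2 * α ^ 2 + a ^ 2) * (4 * α ^ 4 + 12 * a ^ 2 * α ^ 2 + a ^ 4) /
        (4 * a ^ 2 * (10 * α ^ 2 + 3 * a ^ 2))) / (α ^ 2 + (γ + b) ^ 2)
      = ((2 * α ^ 2 + a ^ 2) * (4 * α ^ 4 + 12 * a ^ 2 * α ^ 2 + a ^ 4) /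
        (4 * a ^ 2 * (10 * α ^ 2 + 3 * a ^ 2))) * (2 * (α ^ 2 + γ ^ 2 + a ^ 2 / 2)) /
        ((α ^ 2 + γ ^ 2 + a ^ 2 / 2) ^ 2 - 2 * γ ^ 2 * a ^ 2) := by
    rw [div_add_div _ _ hDm.ne' hDp.ne', hprod]
    congr 1
    linear_combination (2 * ((2 * α ^ 2 + a ^ 2) * (4 * α ^ 4 + 12 * a ^ 2 * α ^ 2 + a ^ 4) /
        (4 * a ^ 2 * (10 * α ^ 2 + 3 * a ^ 2)))) * hb2
  have hrw : ((2 * α ^ 2 + a ^ 2) * (4 * α ^ 4 + 12 * a ^ 2 * α ^ 2 + a ^ 4) /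
        (4 * a ^ 2 * (10 * α ^ 2 + 3 * a ^ 2))) / (α ^ 2 + (γ - b) ^ 2)
      + (-2 * ((2 * α ^ 2 - a ^ 2) * (α ^ 2 + a ^ 2) * α ^ 2) /
        (a ^ 2 * (10 * α ^ 2 + 3 * a ^ 2))) / (α ^ 2 + γ ^ 2)
      + ((2 * α ^ 2 + a ^ 2) * (4 * α ^ 4 + 12 * a ^ 2 * α ^ 2 + a ^ 4) /
        (4 * a ^ 2 * (10 * α ^ 2 + 3 * a ^ 2))) / (α ^ 2 + (γ + b) ^ 2)
      = ((2 * α ^ 2 + a ^ 2) * (4 * α ^ 4 + 12 * a ^ 2 * α ^ 2 + a ^ 4) /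
        (4 * a ^ 2 * (10 * α ^ 2 + 3 * a ^ 2))) * (2 * (α ^ 2 + γ ^ 2 + a ^ 2 / 2)) /
        ((α ^ 2 + γ ^ 2 + a ^ 2 / 2) ^ 2 - 2 * γ ^ 2 * a ^ 2)
      + (-2 * ((2 * α ^ 2 - a ^ 2) * (α ^ 2 + a ^ 2) * α ^ 2) /
        (a ^ 2 * (10 * α ^ 2 + 3 * a ^ 2))) / (α ^ 2 + γ ^ 2) := by
    rw [← hkey]; ring
  rw [hrw]
  have hM : (0:ℝ) < 10 * α ^ 2 + 3 * a ^ 2 := by positivity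
  have ha2 : (0:ℝ) < a ^ 2 := by positivity
  rw [div_add_div _ _ hPr.ne' hD0.ne', le_div_iff₀ (mul_pos hPr hD0)]
  rw [div_mul_eq_mul_div, div_mul_eq_mul_div, ← mul_div_assoc, div_add_div _ _
    (by positivity : (4 * a ^ 2 * (10 * α ^ 2 + 3 * a ^ 2)) ≠ 0)
    (by positivity : (a ^ 2 * (10 * α ^ 2 + 3 * a ^ 2)) ≠ 0),
    le_div_iff₀ (by positivity)]
  have hFM : 0 ≤ a ^ 2 * (10 * α ^ 2 + 3 * a ^ 2) *
      (2 * a ^ 2 * γ ^ 2 * (a ^ 2 - γ ^ 2) *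
        (20 * α ^ 2 * γ ^ 2 + 6 * a ^ 2 * γ ^ 2 + (36 * α ^ 4 - a ^ 4))) :=
    mul_nonneg (by positivity) hF
  nlinarith [hFM]
end

section
/- For (u, v) ∈ ∂([−3/4, −1/4] × [0, 1]) (and hence, by the maximum modulus principle applied to 1/Γ, for all (u,v) in [−3/4,−1/4]×[0,1]), one has |Γ(u + iv)| ≥ 0.4. -/
/-!
Euler's limit formula gives `‖Γ(x + iv)‖² ∏_{j ≤ n} (1 + v²/(x+j)²) → Γ(x)²`, and since
`1/(x+j)² ≤ 1/(x+j-1/2) - 1/(x+j+1/2)` the tail `∏_{j ≥ k}` telescopes to at most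
`(1 - v²/(x+k-1/2))⁻¹`. With the shift `Γ(u+k) = Γ(u) ∏_{j<k} (u+j)` and `k = 7` this gives
`Γ(u+7)² (1 - v²/(u+13/2)) ≤ ‖Γ(u+iv)‖² ∏_{j<7} ((u+j)² + v²)`,
while log-convexity of `Γ` between `u+7` and `u+8` gives `Γ(u+7) ≥ 6! (u+7)^u`.
Evaluating both sides at the worst corner of each of thirteen boxes `[-a/128, -b/128] × [-1, 1]`
leaves thirteen rational inequalities.
-/

open Complex Filter Finset Topology

lemma prod_Ico_one_add_div_sq_mul_one_sub_add_le_one {x s : ℝ} (hs : 0 ≤ s) {k : ℕ}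
    (hk : 0 < x + k - 1 / 2) {m : ℕ} (hkm : k ≤ m) :
    (∏ j ∈ Ico k m, (1 + s / (x + j) ^ 2)) * (1 - s / (x + k - 1 / 2) + s / (x + m - 1 / 2)) ≤
      1 := by
  induction m, hkm using Nat.le_induction with
  | base => simp
  | succ m hkm ih =>
    have hm : (k : ℝ) ≤ m := by exact_mod_cast hkm
    have hm₀ : 0 < x + m - 1 / 2 := by linarith
    have hstep : s / (x + m) ^ 2 ≤ s / (x + m - 1 / 2) - s / (x + (m + 1 : ℕ) - 1 / 2) := by
      push_cast
      have hm₁ : 0 < x + (m + 1) - 1 / 2 := by linarith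
      rw [div_sub_div _ _ hm₀.ne' hm₁.ne', div_le_div_iff₀ (by nlinarith) (by positivity)]
      nlinarith
    have hle : s / (x + (m + 1 : ℕ) - 1 / 2) ≤ s / (x + k - 1 / 2) :=
      div_le_div_of_nonneg_left hs hk (by push_cast; linarith)
    have hσ : 0 ≤ s / (x + m) ^ 2 := by positivity
    rw [prod_Ico_succ_top hkm, mul_assoc]
    refine le_trans (mul_le_mul_of_nonneg_left ?_ (prod_nonneg fun j _ => by positivity)) ih
    nlinarith

lemma prod_Ico_one_add_div_sq_mul_le_one {x s : ℝ} (hs : 0 ≤ s) {k : ℕ}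
    (hk : 0 < x + k - 1 / 2) (m : ℕ) :
    (∏ j ∈ Ico k m, (1 + s / (x + j) ^ 2)) * (1 - s / (x + k - 1 / 2)) ≤ 1 := by
  rcases le_or_gt k m with hkm | hmk
  · refine le_trans ?_ (prod_Ico_one_add_div_sq_mul_one_sub_add_le_one hs hk hkm)
    have : 0 ≤ s / (x + m - 1 / 2) := div_nonneg hs (by
      have : (k : ℝ) ≤ m := by exact_mod_cast hkm
      linarith)
    exact mul_le_mul_of_nonneg_left (by linarith) (prod_nonneg fun j _ => by positivity)
  · rw [Finset.Ico_eq_empty_of_le hmk.le, Finset.prod_empty, one_mul]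
    linarith [div_nonneg hs hk.le]

lemma Complex.norm_GammaSeq_sq_mul_prod_eq_GammaSeq_sq {x : ℝ} (hx : ∀ j : ℕ, x + j ≠ 0)
    (v : ℝ) {n : ℕ} (hn : n ≠ 0) :
    ‖Complex.GammaSeq (x + v * I) n‖ ^ 2 * ∏ j ∈ range (n + 1), (1 + v ^ 2 / (x + j) ^ 2) =
      Real.GammaSeq x n ^ 2 := by
  have hfactor (j : ℕ) :
      ‖(x + v * I : ℂ) + j‖ ^ 2 = (x + j) ^ 2 * (1 + v ^ 2 / (x + j) ^ 2) := by
    rw [show (x + v * I : ℂ) + j = ((x + j : ℝ) : ℂ) + v * I by push_cast; ring,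
      Complex.sq_norm, normSq_add_mul_I, mul_one_add, mul_div_cancel₀ _ (pow_ne_zero 2 (hx j))]
  have hpow : ‖((n : ℝ) : ℂ) ^ (x + v * I : ℂ)‖ = (n : ℝ) ^ x := by
    rw [norm_cpow_eq_rpow_re_of_pos (by positivity)]
    simp
  have hprod : ∏ j ∈ range (n + 1), (1 + v ^ 2 / (x + j) ^ 2) ≠ 0 :=
    prod_ne_zero_iff.mpr fun j _ => by positivity
  rw [GammaSeq, Real.GammaSeq, norm_div, norm_mul, norm_prod, ← ofReal_natCast, hpow,
    norm_natCast, div_pow, div_pow, mul_pow, ← Finset.prod_pow, ← Finset.prod_pow]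
  simp_rw [hfactor, prod_mul_distrib]
  field_simp

lemma Real.Gamma_sq_mul_le_norm_Gamma_sq_mul_prod {x : ℝ} (hx : ∀ j : ℕ, x + j ≠ 0) (v : ℝ)
    {k : ℕ} (hk : 0 < x + k - 1 / 2) :
    Real.Gamma x ^ 2 * (1 - v ^ 2 / (x + k - 1 / 2)) ≤
      ‖Complex.Gamma (x + v * I)‖ ^ 2 * ∏ j ∈ range k, (1 + v ^ 2 / (x + j) ^ 2) := by
  have hlim : Tendsto (fun n => ‖Complex.GammaSeq (x + v * I) n‖ ^ 2) atTop
      (𝓝 (‖Complex.Gamma (x + v * I)‖ ^ 2)) :=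
    ((continuous_norm.tendsto _).comp (Complex.GammaSeq_tendsto_Gamma _)).pow 2
  refine le_of_tendsto_of_tendsto (((Real.GammaSeq_tendsto_Gamma x).pow 2).mul_const _)
    (hlim.mul_const _) ?_
  filter_upwards [eventually_ge_atTop k, eventually_ne_atTop 0] with n hkn hn
  have hsplit := prod_range_mul_prod_Ico (fun j : ℕ => 1 + v ^ 2 / (x + j) ^ 2)
    (by omega : k ≤ n + 1)
  have htail := prod_Ico_one_add_div_sq_mul_le_one (sq_nonneg v) hk (n + 1)
  rw [← norm_GammaSeq_sq_mul_prod_eq_GammaSeq_sq hx v hn, ← hsplit]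
  have hhead :
      0 ≤ ‖Complex.GammaSeq (x + v * I) n‖ ^ 2 * ∏ j ∈ range k, (1 + v ^ 2 / (x + j) ^ 2) :=
    mul_nonneg (sq_nonneg _) (prod_nonneg fun j _ => by positivity)
  calc _ = (‖Complex.GammaSeq (x + v * I) n‖ ^ 2 * ∏ j ∈ range k, (1 + v ^ 2 / (x + j) ^ 2)) *
        ((∏ j ∈ Ico k (n + 1), (1 + v ^ 2 / (x + j) ^ 2)) * (1 - v ^ 2 / (x + k - 1 / 2))) := by
        ring
    _ ≤ _ := mul_le_of_le_one_right hhead htail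

lemma Real.Gamma_add_nat_eq_prod_mul {x : ℝ} {k : ℕ} (hx : ∀ j < k, x + j ≠ 0) :
    Real.Gamma (x + k) = (∏ j ∈ range k, (x + j)) * Real.Gamma x := by
  induction k with
  | zero => simp
  | succ k ih =>
    rw [Nat.cast_succ, ← add_assoc, Real.Gamma_add_one (hx k k.lt_succ_self),
      ih fun j hj => hx j (Nat.lt_succ_of_lt hj), prod_range_succ]
    ring

lemma Real.Gamma_add_nat_sq_mul_le_norm_Gamma_sq_mul_prod {x : ℝ} (hx : ∀ j : ℕ, x + j ≠ 0)
    (v : ℝ) {k : ℕ} (hk : 0 < x + k - 1 / 2) :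
    Real.Gamma (x + k) ^ 2 * (1 - v ^ 2 / (x + k - 1 / 2)) ≤
      ‖Complex.Gamma (x + v * I)‖ ^ 2 * ∏ j ∈ range k, ((x + j) ^ 2 + v ^ 2) := by
  have hfactor : ∏ j ∈ range k, ((x + j) ^ 2 + v ^ 2) =
      (∏ j ∈ range k, (x + j)) ^ 2 * ∏ j ∈ range k, (1 + v ^ 2 / (x + j) ^ 2) := by
    rw [← Finset.prod_pow, ← prod_mul_distrib]
    refine prod_congr rfl fun j _ => ?_
    field_simp [hx j]
  rw [Real.Gamma_add_nat_eq_prod_mul fun j _ => hx j, hfactor, mul_pow, mul_assoc]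
  calc _ ≤ (∏ j ∈ range k, (x + j)) ^ 2 *
        (‖Complex.Gamma (x + v * I)‖ ^ 2 * ∏ j ∈ range k, (1 + v ^ 2 / (x + j) ^ 2)) :=
        mul_le_mul_of_nonneg_left (Real.Gamma_sq_mul_le_norm_Gamma_sq_mul_prod hx v hk)
          (sq_nonneg _)
    _ = _ := by ring

lemma Real.Gamma_add_le_Gamma_mul_rpow {x b : ℝ} (hx : 0 < x) (hb₀ : 0 ≤ b) (hb₁ : b ≤ 1) :
    Real.Gamma (x + b) ≤ Real.Gamma x * x ^ b := by
  rcases hb₀.eq_or_lt with rfl | hb₀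
  · simp
  rcases hb₁.eq_or_lt with rfl | hb₁
  · rw [Real.rpow_one, Real.Gamma_add_one hx.ne', mul_comm]
  have hΓ := Real.Gamma_pos_of_pos hx
  have hconv := Real.Gamma_mul_add_mul_le_rpow_Gamma_mul_rpow_Gamma (a := 1 - b) (b := b) hx
    (by linarith : 0 < x + 1) (by linarith) hb₀ (by ring)
  rwa [show (1 - b) * x + b * (x + 1) = x + b by ring, Real.Gamma_add_one hx.ne',
    Real.mul_rpow hx.le hΓ.le, ← mul_assoc, mul_comm _ (x ^ b), mul_assoc, ← Real.rpow_add hΓ,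
    sub_add_cancel, Real.rpow_one, mul_comm] at hconv

lemma sq_le_max_sq_of_mem_Icc {u₁ u₂ u : ℝ} (hu : u ∈ Set.Icc u₁ u₂) :
    u ^ 2 ≤ max (u₁ ^ 2) (u₂ ^ 2) := by
  calc u ^ 2 = |u| ^ 2 := (sq_abs u).symm
    _ ≤ max |u₁| |u₂| ^ 2 := by gcongr; exact abs_le_max_abs_abs hu.1 hu.2
    _ ≤ max (u₁ ^ 2) (u₂ ^ 2) := by
      rcases max_cases |u₁| |u₂| with ⟨h, _⟩ | ⟨h, _⟩ <;> simp [h, sq_abs]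

lemma prod_sq_add_sq_le_prod_max {u₁ u₂ u v : ℝ} (hu : u ∈ Set.Icc u₁ u₂) (hv : |v| ≤ 1)
    (k : ℕ) :
    ∏ j ∈ range k, ((u + j) ^ 2 + v ^ 2) ≤
      ∏ j ∈ range k, (max ((u₁ + j) ^ 2) ((u₂ + j) ^ 2) + 1) := by
  have hv2 : v ^ 2 ≤ 1 := (sq_le_one_iff_abs_le_one v).mpr hv
  refine prod_le_prod (fun j _ => by positivity) fun j _ => ?_
  have := sq_le_max_sq_of_mem_Icc (u₁ := u₁ + j) (u₂ := u₂ + j) (u := u + j)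
    ⟨by linarith [hu.1], by linarith [hu.2]⟩
  linarith

lemma Real.factorial_mul_rpow_le_Gamma_add_nat {K : ℕ} (hK : 2 ≤ K) {u₁ u₂ u : ℝ} (h₁ : -1 < u₁)
    (h₂ : u₂ ≤ 0) (hu : u ∈ Set.Icc u₁ u₂) :
    ((K - 1).factorial : ℝ) * (u₂ + K) ^ u₁ ≤ Real.Gamma (u + K) := by
  have hK' : (2 : ℝ) ≤ K := by exact_mod_cast hK
  have hx : 0 < u + K := by linarith [hu.1]
  have hconv :=
    Real.Gamma_add_le_Gamma_mul_rpow hx (b := -u) (by linarith [hu.2]) (by linarith [hu.1])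
  rw [add_neg_cancel_comm, Real.rpow_neg hx.le, ← div_eq_mul_inv,
    le_div_iff₀ (Real.rpow_pos_of_pos hx u)] at hconv
  have hfact : Real.Gamma K = (K - 1).factorial := by
    rw [← Real.Gamma_nat_eq_factorial, Nat.cast_sub (by omega)]
    ring_nf
  have hbase : (u₂ + K) ^ u₁ ≤ (u + K) ^ u₁ :=
    Real.rpow_le_rpow_of_nonpos hx (by linarith [hu.2]) (by linarith [hu.1, hu.2])
  have hexp : (u + K) ^ u₁ ≤ (u + K) ^ u :=
    Real.rpow_le_rpow_of_exponent_le (by linarith [hu.1]) hu.1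
  calc ((K - 1).factorial : ℝ) * (u₂ + K) ^ u₁ ≤ (K - 1).factorial * (u + K) ^ u := by
        gcongr; exact hbase.trans hexp
    _ ≤ Real.Gamma (u + K) := hfact ▸ hconv

lemma add_nat_ne_zero_of_mem_Ioo {u : ℝ} (hu : u ∈ Set.Ioo (-1) 0) (j : ℕ) : u + j ≠ 0 := by
  rcases j with _ | j
  · simpa using hu.2.ne
  · have : (0 : ℝ) ≤ j := j.cast_nonneg
    push_cast
    linarith [hu.1]

lemma factorial_mul_rpow_sq_mul_le_norm_Gamma_sq_mul_prod {K : ℕ} (hK : 2 ≤ K) {u₁ u₂ u v : ℝ}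
    (h₁ : -1 < u₁) (h₂ : u₂ < 0) (hu : u ∈ Set.Icc u₁ u₂) (hv : |v| ≤ 1) :
    ((K - 1).factorial * (u₂ + K) ^ u₁) ^ 2 * (1 - 1 / (u₁ + K - 1 / 2)) ≤
      ‖Complex.Gamma (u + v * I)‖ ^ 2 *
        ∏ j ∈ range K, (max ((u₁ + j) ^ 2) ((u₂ + j) ^ 2) + 1) := by
  have hK' : (2 : ℝ) ≤ K := by exact_mod_cast hK
  have hβ₁ : 0 < u₁ + K - 1 / 2 := by linarith
  rcases le_or_gt (1 - 1 / (u₁ + K - 1 / 2)) 0 with hβ | hβ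
  · exact (mul_nonpos_of_nonneg_of_nonpos (sq_nonneg _) hβ).trans (by positivity)
  have hβu : 1 - 1 / (u₁ + K - 1 / 2) ≤ 1 - v ^ 2 / (u + K - 1 / 2) := by
    have := div_le_div₀ zero_le_one ((sq_le_one_iff_abs_le_one v).mpr hv) hβ₁
      (by linarith [hu.1] : u₁ + K - 1 / 2 ≤ u + K - 1 / 2)
    linarith
  have hΓ := Real.factorial_mul_rpow_le_Gamma_add_nat hK h₁ h₂.le hu
  have hpos : 0 ≤ ((K - 1).factorial : ℝ) * (u₂ + K) ^ u₁ := by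
    have : 0 < u₂ + K := by linarith [hu.1, hu.2]
    positivity
  calc ((K - 1).factorial * (u₂ + K) ^ u₁) ^ 2 * (1 - 1 / (u₁ + K - 1 / 2))
      ≤ Real.Gamma (u + K) ^ 2 * (1 - v ^ 2 / (u + K - 1 / 2)) := by gcongr
    _ ≤ ‖Complex.Gamma (u + v * I)‖ ^ 2 * ∏ j ∈ range K, ((u + j) ^ 2 + v ^ 2) :=
      Real.Gamma_add_nat_sq_mul_le_norm_Gamma_sq_mul_prod
        (add_nat_ne_zero_of_mem_Ioo ⟨by linarith [hu.1], by linarith [hu.2]⟩) v (by linarith [hu.1])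
    _ ≤ _ := mul_le_mul_of_nonneg_left (prod_sq_add_sq_le_prod_max hu hv K) (sq_nonneg _)

lemma le_rpow_neg_div_of_pow_mul_pow_le_one {q y : ℝ} (hy : 0 < y) {a n : ℕ} (hn : n ≠ 0)
    (h : q ^ n * y ^ a ≤ 1) : q ≤ y ^ (-(a / n : ℝ)) := by
  rcases lt_or_ge q 0 with hq | hq
  · exact hq.le.trans (Real.rpow_pos_of_pos hy _).le
  have hpow : (y ^ (-(a / n : ℝ))) ^ n = (y ^ a)⁻¹ := by
    rw [← Real.rpow_mul_natCast hy.le, neg_mul, div_mul_cancel₀ _ (by exact_mod_cast hn),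
      Real.rpow_neg hy.le, Real.rpow_natCast]
  rw [← pow_le_pow_iff_left₀ hq (Real.rpow_pos_of_pos hy _).le hn, hpow, ← one_div,
    le_div_iff₀ (pow_pos hy a)]
  exact h

/-- `IsGammaBox a b` is a numerical certificate that `‖Γ(u + v i)‖ ≥ 2/5` on the box
`[-a/128, -b/128] × [-1, 1]`: it is the bound of
`factorial_mul_rpow_sq_mul_le_norm_Gamma_sq_mul_prod` with `K = 7`, raised to the power `128`
to clear the rational exponent `u₁ = -a/128`. -/
def IsGammaBox (a b : ℕ) : Prop :=
  0 < b ∧ a < 128 ∧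
    (4 / 25 *
          (∏ j ∈ range 7, (max ((-(a / 128 : ℝ) + j) ^ 2) ((-(b / 128 : ℝ) + j) ^ 2) + 1)) /
        ((1 - 1 / (-(a / 128 : ℝ) + 7 - 1 / 2)) * (Nat.factorial 6 : ℝ) ^ 2)) ^ 128 *
      (-(b / 128 : ℝ) + 7) ^ (2 * a) ≤ 1

lemma IsGammaBox.two_fifths_le_norm_Gamma {a b : ℕ} (h : IsGammaBox a b) {u v : ℝ}
    (hu : u ∈ Set.Icc (-(a / 128 : ℝ)) (-(b / 128 : ℝ))) (hv : |v| ≤ 1) :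
    2 / 5 ≤ ‖Complex.Gamma (u + v * I)‖ := by
  obtain ⟨hb, ha, hcert⟩ := h
  set u₁ : ℝ := -(a / 128 : ℝ)
  set u₂ : ℝ := -(b / 128 : ℝ)
  set P := ∏ j ∈ range 7, (max ((u₁ + j) ^ 2) ((u₂ + j) ^ 2) + 1)
  set β := 1 - 1 / (u₁ + 7 - 1 / 2)
  have h₁ : -1 < u₁ := by
    have : (a : ℝ) < 128 := by exact_mod_cast ha
    simp only [u₁]; linarith
  have h₂ : u₂ < 0 := by
    have : (0 : ℝ) < b := by exact_mod_cast hb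
    simp only [u₂]; linarith
  have hP : 0 < P := prod_pos fun j _ => by positivity
  have hβ : 0 < β := by
    have : 1 / (u₁ + 7 - 1 / 2) < 1 := (div_lt_one (by linarith)).mpr (by linarith)
    simp only [β]; linarith
  have hbox :=
    factorial_mul_rpow_sq_mul_le_norm_Gamma_sq_mul_prod (K := 7) (by norm_num) h₁ h₂ hu hv
  have hu₂ : 0 < u₂ + 7 := by linarith [hu.1, hu.2]
  have hq := le_rpow_neg_div_of_pow_mul_pow_le_one hu₂ (by norm_num) hcert
  rw [show (-((2 * a : ℕ) / (128 : ℕ) : ℝ)) = u₁ * (2 : ℕ) by push_cast; ring,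
    Real.rpow_mul_natCast hu₂.le] at hq
  replace hq :=
    (div_le_iff₀ (by positivity : (0 : ℝ) < β * (Nat.factorial 6 : ℝ) ^ 2)).mp hq
  have hsq : (2 / 5 : ℝ) ^ 2 ≤ ‖Complex.Gamma (u + v * I)‖ ^ 2 := by
    refine le_of_mul_le_mul_right ?_ hP
    calc (2 / 5 : ℝ) ^ 2 * P ≤ ((u₂ + 7) ^ u₁) ^ 2 * (β * (Nat.factorial 6 : ℝ) ^ 2) := by
          norm_num at hq ⊢; exact hq
      _ = ((Nat.factorial (7 - 1) : ℝ) * (u₂ + (7 : ℕ)) ^ u₁) ^ 2 * β := by push_cast; ring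
      _ ≤ _ := hbox
  exact (pow_le_pow_iff_left₀ (by norm_num) (norm_nonneg _) two_ne_zero).mp hsq

lemma forall_mem_Icc_of_isChain {α : Type*} (f : α → ℝ) {p : ℝ → Prop} :
    ∀ (a b : α) (l : List α),
      (a :: b :: l).IsChain (fun x y => ∀ u ∈ Set.Icc (f x) (f y), p u) →
        ∀ u ∈ Set.Icc (f a) (f ((b :: l).getLast (List.cons_ne_nil b l))), p u := by
  intro a b l
  induction l generalizing a b with
  | nil => simp
  | cons c l ih =>
    intro hchain u hu
    rw [List.isChain_cons_cons] at hchain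
    rcases le_or_gt u (f b) with hub | hub
    · exact hchain.1 u ⟨hu.1, hub⟩
    · exact ih b c hchain.2 u ⟨hub.le, by simpa using hu.2⟩

theorem gamma_lower_bound_rectangle (u v : ℝ)
    (hu : u ∈ Set.Icc (-3/4 : ℝ) (-1/4)) (hv : v ∈ Set.Icc (0 : ℝ) 1) :
    0.4 ≤ ‖Complex.Gamma (u + v * I)‖ := by
  have hv' : |v| ≤ 1 := abs_le.mpr ⟨by linarith [hv.1], hv.2⟩
  have hboxes : [96, 95, 93, 91, 89, 86, 83, 79, 74, 68, 61, 53, 43, 32].IsChain IsGammaBox := by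
    simp only [List.isChain_cons_cons, List.IsChain.singleton, and_true, IsGammaBox]
    norm_num [prod_range_succ, Nat.factorial]
  have hcover := forall_mem_Icc_of_isChain (fun a : ℕ => -(a / 128 : ℝ)) 96 95 _
    (hboxes.imp fun _ _ h u hu => h.two_fifths_le_norm_Gamma (u := u) hu hv')
  norm_num at hcover ⊢
  exact hcover u (by linarith [hu.1]) (by linarith [hu.2])
end
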